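/- Let X = (x, y, z) : ℝ → ℝ³ be a solution of the 1-1-1 ABC flow system with X(0) = (-π/2, 0, a) for some a ∈ [0, π/2), and let t_a > 0 be such that X(t) ∈ D for all t ∈ (0, t_a) and X(t_a) ∈ ∂D. Then x(t_a) = 0 or z(t_a) = π/2, and y(t_a) ∈ [-π/2, π/4]. -/

import Mathlib

open Real Set Filter

/-- A solution of the 1-1-1 ABC flow system. -/
def IsABCSol (x y z : ℝ → ℝ) : Prop :=
  ∀ t : ℝ,
    HasDerivAt x (Real.sin (z t) + Real.cos (y t)) t ∧
    HasDerivAt y (Real.sin (x t) + Real.cos (z t)) t ∧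
    HasDerivAt z (Real.sin (y t) + Real.cos (x t)) t

/-- The open triangle `R` in the `xy`-plane with vertices `(0, -π/2)`, `(0, 3π/2)`, `(-π, π/2)`. -/
def triR : Set (ℝ × ℝ) :=
  {p | -(Real.pi / 2) < p.1 + p.2 ∧ p.2 - p.1 < 3 * Real.pi / 2 ∧ p.1 < 0}

/-- The open prism `D = R × (0, π/2)` in `ℝ³`. -/
def prismD : Set (ℝ × ℝ × ℝ) :=
  {p | (p.1, p.2.1) ∈ triR ∧ 0 < p.2.2 ∧ p.2.2 < Real.pi / 2}

/-! Up to the exit time the trajectory stays in `D̄`. There `z - y` and `x + π/2 - 2y` start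
nonnegative and satisfy `f' ≥ f` wherever `f < 0`, so they stay nonnegative; hence
`-π/2 ≤ -π/2 - x ≤ y ≤ (x + π/2)/2 ≤ π/4`, which also keeps the exit point off the face
`y - x = 3π/2`. It is not on `z = 0` since `ż = sin y + cos x ≥ 0` on `R̄`, nor on
`x + y = -π/2` since there `(x + y)' = sin z + cos z ≥ 1`. -/

theorem nonneg_of_le_deriv_of_neg {f f' : ℝ → ℝ} {a b : ℝ} (hf : ∀ t, HasDerivAt f (f' t) t)
    (ha : 0 ≤ f a) (hf' : ∀ t ∈ Ico a b, f t < 0 → f t ≤ f' t) : ∀ t ∈ Icc a b, 0 ≤ f t := by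
  intro t ht
  refine neg_nonpos.1 (le_of_forall_pos_le_add fun δ hδ => ?_)
  -- `-f` never crosses the barrier `δ e^{2(s - t)}`: where they meet, `-f' ≤ -f` is below its slope
  have hB : ∀ s, HasDerivAt (fun s => δ * exp (2 * (s - t))) (2 * (δ * exp (2 * (s - t)))) s := by
    intro s
    exact ((((hasDerivAt_id' s).sub_const t).const_mul 2).exp.const_mul δ).congr_deriv (by ring)
  have hbarrier := image_le_of_deriv_right_lt_deriv_boundary (a := a) (b := t) (f := fun s => -f s)
    (fun s _ => (hf s).neg.continuousAt.continuousWithinAt)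
    (fun s _ => (hf s).neg.hasDerivWithinAt) (by nlinarith [exp_pos (2 * (a - t))]) hB
    (fun s hs hfs => by
      have hpos : 0 < δ * exp (2 * (s - t)) := by positivity
      linarith [hf' s ⟨hs.1, hs.2.trans_le ht.2⟩ (by linarith)])
    (right_mem_Icc.2 ht.1)
  simpa using hbarrier

theorem IsMinOn.hasDerivAt_nonpos_of_right_endpoint {f : ℝ → ℝ} {f' a b : ℝ}
    (h : IsMinOn f (Icc a b) b) (hab : a < b) (hf : HasDerivAt f f' b) : f' ≤ 0 := by
  have hcone : a - b ∈ posTangentConeAt (Icc a b) b :=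
    sub_mem_posTangentConeAt_of_segment_subset ((convex_Icc a b).segment_subset
      (right_mem_Icc.2 hab.le) (left_mem_Icc.2 hab.le))
  have := h.localize.hasFDerivWithinAt_nonneg hf.hasDerivWithinAt.hasFDerivWithinAt hcone
  simp only [ContinuousLinearMap.toSpanSingleton_apply, smul_eq_mul] at this
  nlinarith

theorem mem_closure_of_forall_mem_Ioo {E : Type*} [TopologicalSpace E] {γ : ℝ → E} {S : Set E}
    {a b t : ℝ} (hγ : ContinuousOn γ (Icc a b)) (hab : a < b) (hS : ∀ s ∈ Ioo a b, γ s ∈ S)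
    (ht : t ∈ Icc a b) : γ t ∈ closure S := by
  rw [← closure_Ioo hab.ne] at ht hγ
  exact closure_mono (image_subset_iff.2 hS) (hγ.image_closure ⟨t, ht, rfl⟩)

theorem one_le_sin_add_cos {z : ℝ} (h0 : 0 ≤ z) (h1 : z ≤ π / 2) : 1 ≤ sin z + cos z := by
  have hs : 0 ≤ sin z := sin_nonneg_of_nonneg_of_le_pi h0 (by linarith [pi_pos])
  have hc : 0 ≤ cos z := cos_nonneg_of_mem_Icc ⟨by linarith [pi_pos], h1⟩
  nlinarith [sin_sq_add_cos_sq z, sin_le_one z, cos_le_one z]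

theorem sin_add_cos_nonneg {w : ℝ} (h0 : -(π / 4) ≤ w) (h1 : w ≤ 3 * π / 4) :
    0 ≤ sin w + cos w := by
  have hs : 0 ≤ sin (w + π / 4) := sin_nonneg_of_nonneg_of_le_pi (by linarith) (by linarith)
  rw [sin_add, cos_pi_div_four, sin_pi_div_four] at hs
  nlinarith [sqrt_pos.2 (show (0 : ℝ) < 2 by norm_num)]

theorem sin_add_cos_nonneg_of_triangle {x y : ℝ} (hx : x ≤ 0) (hxy : -(π / 2) ≤ x + y)
    (hyx : y - x ≤ 3 * π / 2) : 0 ≤ sin y + cos x := by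
  rw [← cos_pi_div_two_sub, cos_add_cos]
  have h1 : 0 ≤ cos ((π / 2 - y + x) / 2) := cos_nonneg_of_mem_Icc ⟨by linarith, by linarith⟩
  have h2 : 0 ≤ cos ((π / 2 - y - x) / 2) := cos_nonneg_of_mem_Icc ⟨by linarith, by linarith⟩
  positivity

theorem abc_rate_z_sub_y_ge {x y z : ℝ} (hx : x ≤ 0) (hxy : -(π / 2) ≤ x + y)
    (hyx : y - x ≤ 3 * π / 2) (hz0 : 0 ≤ z) (hz1 : z ≤ π / 2) (hzy : z ≤ y) :
    z - y ≤ (sin y + cos x) - (sin x + cos z) := by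
  rcases le_or_gt y (π / 2) with hy | hy
  · have hcos : cos z - cos y ≤ y - z := by
      have := abs_cos_sub_cos_le z y
      rw [abs_of_nonpos (by linarith : z - y ≤ 0)] at this
      linarith [le_abs_self (cos z - cos y)]
    have hsc : sin x - cos x ≤ sin y - cos y := by
      have e : (sin y - cos y) - (sin x - cos x) =
          2 * sin ((y - x) / 2) * (sin ((x + y) / 2) + cos ((x + y) / 2)) := by
        rw [show (sin y - cos y) - (sin x - cos x) = (sin y - sin x) + (cos x - cos y) by ring,
          sin_sub_sin, cos_sub_cos, show (x - y) / 2 = -((y - x) / 2) by ring, sin_neg,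
          add_comm y x]
        ring
      have h1 : 0 ≤ sin ((y - x) / 2) := sin_nonneg_of_nonneg_of_le_pi (by linarith) (by linarith)
      have h2 := sin_add_cos_nonneg (w := (x + y) / 2) (by linarith) (by linarith)
      nlinarith [mul_nonneg h1 h2]
    linarith
  · have hsx : sin x ≤ 0 := sin_nonpos_of_nonpos_of_neg_pi_le hx (by linarith)
    have hcz : cos z ≤ π / 2 - z := by
      have := abs_cos_sub_cos_le z (π / 2)
      rw [cos_pi_div_two, sub_zero, abs_of_nonpos (by linarith : z - π / 2 ≤ 0)] at this
      linarith [le_abs_self (cos z)]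
    have hsy : 1 - (y - π / 2) ≤ sin y := by
      have := abs_sin_sub_sin_le y (π / 2)
      rw [sin_pi_div_two, abs_of_nonneg (by linarith : 0 ≤ y - π / 2)] at this
      linarith [neg_abs_le (sin y - 1)]
    linarith [neg_one_le_cos x]

theorem abc_rate_x_sub_two_mul_y_nonneg {x y z : ℝ} (hx : x ≤ 0) (hxy : -(π / 2) ≤ x + y)
    (hyx : x + π / 2 ≤ 2 * y) (hyz : y ≤ z) (hz : z ≤ π / 2) :
    2 * (sin x + cos z) ≤ sin z + cos y := by
  have hy0 : 0 ≤ y := by linarith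
  have hcos : cos z ≤ cos y := cos_le_cos_of_nonneg_of_le_pi hy0 (by linarith [pi_pos]) hyz
  rcases le_or_gt (π / 4) y with hy | hy
  · have hsx : sin x ≤ 0 := sin_nonpos_of_nonpos_of_neg_pi_le hx (by linarith)
    have hcz : cos z ≤ sin z := by
      rw [← sin_pi_div_two_sub]
      exact sin_le_sin_of_le_of_le_pi_div_two (by linarith) hz (by linarith)
    linarith
  · have hsx : sin x ≤ sin (2 * y - π / 2) := by
      rcases le_or_gt (-(π / 2)) x with hx' | hx'
      · exact sin_le_sin_of_le_of_le_pi_div_two hx' (by linarith) (by linarith)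
      · calc sin x = sin (-π - x) := by
              rw [show -π - x = -(x + π) by ring, sin_neg, sin_add_pi, neg_neg]
          _ ≤ sin (2 * y - π / 2) :=
              sin_le_sin_of_le_of_le_pi_div_two (by linarith) (by linarith) (by linarith)
    rw [← neg_sub, sin_neg, sin_pi_div_two_sub, cos_two_mul'] at hsx
    have hsin : sin y ≤ sin z := sin_le_sin_of_le_of_le_pi_div_two (by linarith) hz hyz
    have hsc : sin y ≤ cos y := by
      rw [← sin_pi_div_two_sub]
      exact sin_le_sin_of_le_of_le_pi_div_two (by linarith) (by linarith) (by linarith)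
    have hone := one_le_sin_add_cos hy0 (by linarith)
    nlinarith [mul_nonneg (sub_nonneg.2 hsc) (by linarith : 0 ≤ 2 * (cos y + sin y) - 1)]

def closedPrism : Set (ℝ × ℝ × ℝ) :=
  {p | -(π / 2) ≤ p.1 + p.2.1 ∧ p.2.1 - p.1 ≤ 3 * π / 2 ∧ p.1 ≤ 0 ∧ 0 ≤ p.2.2 ∧ p.2.2 ≤ π / 2}

theorem closure_prismD_subset : closure prismD ⊆ closedPrism := by
  refine closure_minimal (fun p ⟨⟨h1, h2, h3⟩, h4, h5⟩ => ⟨h1.le, h2.le, h3.le, h4.le, h5.le⟩) ?_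
  simp only [closedPrism, ofPred_and]
  apply_rules [IsClosed.inter, isClosed_le] <;> fun_prop

theorem isOpen_prismD : IsOpen prismD := by
  simp only [prismD, triR, ofPred_and]
  apply_rules [IsOpen.inter, isOpen_lt] <;> fun_prop

theorem frontier_prismD_cases {p : ℝ × ℝ × ℝ} (hp : p ∈ frontier prismD) :
    p.1 + p.2.1 = -(π / 2) ∨ p.2.1 - p.1 = 3 * π / 2 ∨ p.1 = 0 ∨ p.2.2 = 0 ∨ p.2.2 = π / 2 := by
  rw [isOpen_prismD.frontier_eq] at hp
  obtain ⟨h1, h2, h3, h4, h5⟩ := closure_prismD_subset hp.1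
  by_contra! hne
  exact hp.2 ⟨⟨h1.lt_of_ne' hne.1, h2.lt_of_ne hne.2.1, h3.lt_of_ne hne.2.2.1⟩,
    h4.lt_of_ne' hne.2.2.2.1, h5.lt_of_ne hne.2.2.2.2⟩

namespace IsABCSol

variable {x y z : ℝ → ℝ} {T : ℝ}

theorem continuous (h : IsABCSol x y z) : Continuous fun t => (x t, y t, z t) :=
  continuous_iff_continuousAt.2 fun t =>
    (h t).1.continuousAt.prodMk ((h t).2.1.continuousAt.prodMk (h t).2.2.continuousAt)

theorem y_le_z (h : IsABCSol x y z) (hD : ∀ t ∈ Icc 0 T, (x t, y t, z t) ∈ closedPrism)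
    (h0 : y 0 ≤ z 0) : ∀ t ∈ Icc 0 T, y t ≤ z t := by
  have key := nonneg_of_le_deriv_of_neg (f := fun t => z t - y t)
    (fun t => (h t).2.2.sub (h t).2.1) (sub_nonneg.2 h0)
    fun t ht hneg => by
      obtain ⟨h1, h2, h3, h4, h5⟩ := hD t (Ico_subset_Icc_self ht)
      exact abc_rate_z_sub_y_ge h3 h1 h2 h4 h5 (by linarith)
  exact fun t ht => sub_nonneg.1 (key t ht)

theorem two_mul_y_le (h : IsABCSol x y z) (hD : ∀ t ∈ Icc 0 T, (x t, y t, z t) ∈ closedPrism)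
    (hyz : ∀ t ∈ Icc 0 T, y t ≤ z t) (h0 : 2 * y 0 ≤ x 0 + π / 2) :
    ∀ t ∈ Icc 0 T, 2 * y t ≤ x t + π / 2 := by
  have key := nonneg_of_le_deriv_of_neg (f := fun t => x t + π / 2 - 2 * y t)
    (fun t => ((h t).1.add_const (π / 2)).sub ((h t).2.1.const_mul 2)) (sub_nonneg.2 h0)
    fun t ht hneg => by
      obtain ⟨h1, -, h3, -, h5⟩ := hD t (Ico_subset_Icc_self ht)
      have := abc_rate_x_sub_two_mul_y_nonneg h3 h1 (by linarith)
        (hyz t (Ico_subset_Icc_self ht)) h5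
      linarith
  exact fun t ht => sub_nonneg.1 (key t ht)

theorem monotoneOn_z (h : IsABCSol x y z)
    (hD : ∀ t ∈ Icc 0 T, (x t, y t, z t) ∈ closedPrism) : MonotoneOn z (Icc 0 T) := by
  refine monotoneOn_of_hasDerivWithinAt_nonneg (convex_Icc 0 T)
    (continuous_iff_continuousAt.2 fun t => (h t).2.2.continuousAt).continuousOn
    (fun t _ => (h t).2.2.hasDerivWithinAt) fun t ht => ?_
  rw [interior_Icc] at ht
  obtain ⟨h1, h2, h3, -, -⟩ := hD t (Ioo_subset_Icc_self ht)
  exact sin_add_cos_nonneg_of_triangle h3 h1 h2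

theorem x_add_y_ne (h : IsABCSol x y z) (hT : 0 < T)
    (hD : ∀ t ∈ Icc 0 T, (x t, y t, z t) ∈ closedPrism) : x T + y T ≠ -(π / 2) := by
  intro hxy
  obtain ⟨-, -, -, hz0, hz1⟩ := hD T (right_mem_Icc.2 hT.le)
  -- at an exit through `x + y = -π/2` the rate of `x + y` would be `sin z + cos z ≥ 1`
  have hmin : IsMinOn (fun t => x t + y t) (Icc 0 T) T := fun t ht => by
    show x T + y T ≤ x t + y t
    rw [hxy]
    exact (hD t ht).1
  have hrate := hmin.hasDerivAt_nonpos_of_right_endpoint hT ((h T).1.add (h T).2.1)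
  rw [show y T = -(x T + π / 2) by linarith, cos_neg, cos_add_pi_div_two] at hrate
  linarith [one_le_sin_add_cos hz0 hz1]

end IsABCSol

theorem stmt12 (x y z : ℝ → ℝ) (h : IsABCSol x y z) (a : ℝ) (ha : a ∈ Set.Ico 0 (π / 2))
    (hx0 : x 0 = -(π / 2)) (hy0 : y 0 = 0) (hz0 : z 0 = a)
    (tₐ : ℝ) (htₐ : 0 < tₐ) (hin : ∀ t ∈ Set.Ioo 0 tₐ, (x t, y t, z t) ∈ prismD)
    (hbd : (x tₐ, y tₐ, z tₐ) ∈ frontier prismD) :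
    (x tₐ = 0 ∨ z tₐ = π / 2) ∧ y tₐ ∈ Set.Icc (-(π / 2)) (π / 4) := by
  have hT : tₐ ∈ Icc 0 tₐ := right_mem_Icc.2 htₐ.le
  have hD : ∀ t ∈ Icc 0 tₐ, (x t, y t, z t) ∈ closedPrism := fun t ht =>
    closure_prismD_subset (mem_closure_of_forall_mem_Ioo h.continuous.continuousOn htₐ hin ht)
  have hyz := h.y_le_z hD (by rw [hy0, hz0]; exact ha.1)
  have hy := h.two_mul_y_le hD hyz (by rw [hx0, hy0]; linarith) tₐ hT
  have hz : 0 < z tₐ := (hin (tₐ / 2) ⟨by linarith, by linarith⟩).2.1.trans_le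
    (h.monotoneOn_z hD ⟨by linarith, by linarith⟩ hT (by linarith))
  obtain ⟨h1, -, h3, -, -⟩ := hD tₐ hT
  refine ⟨?_, by linarith, by linarith⟩
  rcases frontier_prismD_cases hbd with hface | hface | hface | hface | hface
  · exact absurd hface (h.x_add_y_ne htₐ hD)
  · linarith [pi_pos]
  · exact Or.inl hface
  · exact absurd hface hz.ne'
  · exact Or.inr hface
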